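/- Let f : R → R' be a morphism of commutative rings such that for every r' ∈ R' there exist r ∈ R and an invertible u ∈ R' with r' = u·f(r). Then an R'-module C is contraadjusted as an R'-module if and only if C is contraadjusted as an R-module (via restriction of scalars). -/

import Mathlib

/-!
`Ext¹_A(A[t⁻¹], C)` is computed by the free resolution
`0 → A^(ℕ) → A^(ℕ) → A[t⁻¹] → 0`, `eₙ ↦ eₙ - t eₙ₊₁`, `eₙ ↦ t⁻ⁿ`, so it vanishes iff every
sequence `(bₙ)` in `C` has the form `bₙ = cₙ - t cₙ₊₁`. This condition only involves the action
of `t` on `C`, so it reads the same for `t ∈ R` and for `f t ∈ R'`, and it is unchanged when `t`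
is replaced by `u t` with `u` a unit: rescale `cₙ` by `u⁻ⁿ`.
-/

open CategoryTheory

universe v u

section Telescope

open Finsupp

variable {A : Type*} [CommRing A] (t : A)

noncomputable def telescopeDiff : (ℕ →₀ A) →ₗ[A] (ℕ →₀ A) :=
  LinearMap.id - t • lmapDomain A A Nat.succ

@[simp]
lemma telescopeDiff_single (n : ℕ) (a : A) :
    telescopeDiff t (single n a) = single n a - single (n + 1) (t * a) := by
  simp [telescopeDiff]

@[simp]
lemma telescopeDiff_apply_zero (x : ℕ →₀ A) : telescopeDiff t x 0 = x 0 := by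
  simp [telescopeDiff, mapDomain_of_notMem_range]

@[simp]
lemma telescopeDiff_apply_succ (x : ℕ →₀ A) (n : ℕ) :
    telescopeDiff t x (n + 1) = x (n + 1) - t * x n := by
  simp [telescopeDiff, mapDomain_apply Nat.succ_injective]

lemma telescopeDiff_injective : Function.Injective (telescopeDiff t) := by
  refine (injective_iff_map_eq_zero _).2 fun x hx => Finsupp.ext fun n => ?_
  induction n with
  | zero => simpa using congr($hx 0)
  | succ n ih => simpa [ih] using congr($hx (n + 1))

lemma single_sub_single_pow_mul_mem_range (n k : ℕ) (a : A) :
    single n a - single (n + k) (t ^ k * a) ∈ LinearMap.range (telescopeDiff t) := by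
  induction k with
  | zero => simp
  | succ k ih =>
    have hstep : single (n + k) (t ^ k * a) - single (n + k + 1) (t ^ (k + 1) * a)
        = telescopeDiff t (single (n + k) (t ^ k * a)) := by
      rw [telescopeDiff_single, pow_succ', mul_assoc]
    rw [← add_assoc, ← sub_add_sub_cancel _ (single (n + k) (t ^ k * a))]
    exact add_mem ih (hstep ▸ LinearMap.mem_range_self _ _)

lemma exists_sub_single_mem_range (x : ℕ →₀ A) :
    ∃ N b, x - single N b ∈ LinearMap.range (telescopeDiff t) := by
  induction x using Finsupp.induction_linear with
  | zero => exact ⟨0, 0, by simp⟩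
  | single n a => exact ⟨n, a, by simp⟩
  | add x y hx hy =>
    obtain ⟨N, b, hb⟩ := hx
    obtain ⟨M, c, hc⟩ := hy
    refine ⟨N + M, t ^ M * b + t ^ N * c, ?_⟩
    have hsum := add_mem (add_mem hb (single_sub_single_pow_mul_mem_range t N M b))
      (add_mem hc (single_sub_single_pow_mul_mem_range t M N c))
    convert hsum using 1
    rw [add_comm M N, single_add]
    abel

variable (S : Type*) [CommRing S] [Algebra A S] [IsLocalization.Away t S]

noncomputable def telescopeProj : (ℕ →₀ A) →ₗ[A] S :=
  linearCombination A fun n => IsLocalization.Away.invSelf t ^ n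

@[simp]
lemma telescopeProj_single (n : ℕ) (a : A) :
    telescopeProj t S (single n a) = a • IsLocalization.Away.invSelf t ^ n := by
  simp [telescopeProj]

lemma telescopeProj_comp_telescopeDiff : telescopeProj t S ∘ₗ telescopeDiff t = 0 := by
  refine Finsupp.lhom_ext fun n a => ?_
  simp only [LinearMap.comp_apply, telescopeDiff_single, map_sub, telescopeProj_single,
    Algebra.smul_def, map_mul, LinearMap.zero_apply]
  linear_combination (-(algebraMap A S a * IsLocalization.Away.invSelf t ^ n)) *
    IsLocalization.Away.mul_invSelf (S := S) t

lemma telescopeProj_surjective : Function.Surjective (telescopeProj t S) := by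
  intro z
  obtain ⟨n, a, hz⟩ := IsLocalization.Away.surj t z
  refine ⟨single n a, ?_⟩
  rw [telescopeProj_single, Algebra.smul_def, ← hz, mul_assoc, ← mul_pow,
    IsLocalization.Away.mul_invSelf, one_pow, mul_one]

lemma exact_telescopeDiff_telescopeProj :
    Function.Exact (telescopeDiff t) (telescopeProj t S) := by
  have hle := LinearMap.range_le_ker_iff.2 (telescopeProj_comp_telescopeDiff t S)
  refine LinearMap.exact_iff.2 (le_antisymm (fun x hx => ?_) hle)
  obtain ⟨N, b, hb⟩ := exists_sub_single_mem_range t x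
  have hN : telescopeProj t S (single N b) = 0 := by
    simpa [LinearMap.mem_ker.1 hx] using hle hb
  have hb0 : algebraMap A S b = 0 := by
    have hunit : (algebraMap A S t * IsLocalization.Away.invSelf t) ^ N = 1 := by
      rw [IsLocalization.Away.mul_invSelf, one_pow]
    rw [telescopeProj_single, Algebra.smul_def] at hN
    linear_combination algebraMap A S t ^ N * hN - algebraMap A S b * hunit
  obtain ⟨⟨_, m, rfl⟩, hm⟩ := (IsLocalization.map_eq_zero_iff (Submonoid.powers t) S b).1 hb0
  have hsingle := single_sub_single_pow_mul_mem_range t N m b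
  rw [hm, single_zero, sub_zero] at hsingle
  simpa using add_mem hb hsingle

lemma lift_comp_telescopeDiff {M : Type*} [AddCommGroup M] [Module A M] (c : ℕ → M) :
    lift M A ℕ c ∘ₗ telescopeDiff t = lift M A ℕ fun n => c n - t • c (n + 1) := by
  refine Finsupp.lhom_ext fun n a => ?_
  simp only [LinearMap.comp_apply, telescopeDiff_single, map_sub, lift_apply, zero_smul,
    sum_single_index, smul_sub, mul_comm t, mul_smul, sub_self]

lemma forall_exists_comp_telescopeDiff_iff {M : Type*} [AddCommGroup M] [Module A M] :
    (∀ g : (ℕ →₀ A) →ₗ[A] M, ∃ h : (ℕ →₀ A) →ₗ[A] M, h ∘ₗ telescopeDiff t = g) ↔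
      Function.Surjective fun (c : ℕ → M) n => c n - t • c (n + 1) := by
  constructor
  · intro H b
    obtain ⟨h, hh⟩ := H (lift M A ℕ b)
    refine ⟨(lift M A ℕ).symm h, (lift M A ℕ).injective ?_⟩
    rw [← lift_comp_telescopeDiff, AddEquiv.apply_symm_apply, hh]
  · intro H g
    obtain ⟨c, hc⟩ := H ((lift M A ℕ).symm g)
    exact ⟨lift M A ℕ c, (lift_comp_telescopeDiff t c).trans
      ((congrArg _ hc).trans (AddEquiv.apply_symm_apply _ _))⟩

end Telescope

namespace CategoryTheory.ShortComplex

open Limits ZeroObject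

variable {C : Type u} [Category.{v} C] [Abelian C] (S : ShortComplex C)

noncomputable def lengthOneComplex : ChainComplex C ℕ where
  X | 0 => S.X₂ | 1 => S.X₁ | _ + 2 => 0
  d | 1, 0 => S.f | _, _ => 0
  shape
    | 1, 0, h => absurd rfl h
    | 0, _, _ | 1, _ + 1, _ | _ + 2, _, _ => rfl
  d_comp_d'
    | 1, 0, _, _, _ => comp_zero
    | 0, _, _, _, _ | 1, _ + 1, _, _, _ | _ + 2, _, _, _, _ => zero_comp

variable {S}

lemma ShortExact.lengthOneComplex_exactAt_succ (hS : S.ShortExact) (n : ℕ) :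
    S.lengthOneComplex.ExactAt (n + 1) := by
  rw [HomologicalComplex.exactAt_iff' _ (n + 2) (n + 1) n (by simp) (by simp)]
  match n with
  | 0 =>
    rw [ShortComplex.exact_iff_mono _ rfl]
    exact hS.mono_f
  | n + 1 => exact ShortComplex.exact_of_isZero_X₂ _ (isZero_zero C)

noncomputable def ShortExact.projectiveResolution (hS : S.ShortExact) [Projective S.X₁]
    [Projective S.X₂] : ProjectiveResolution S.X₃ where
  complex := S.lengthOneComplex
  projective
    | 0 => ‹Projective S.X₂›
    | 1 => ‹Projective S.X₁›
    | _ + 2 => Projective.zero_projective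
  π := (ChainComplex.toSingle₀Equiv _ _).symm ⟨S.g, S.zero⟩
  quasiIso := ⟨fun n => by
    cases n with
    | zero =>
      rw [ChainComplex.quasiIsoAt₀_iff, ShortComplex.quasiIso_iff_of_zeros' _ rfl rfl rfl]
      refine (ShortComplex.exact_and_epi_g_iff_of_iso (S₂ := S) ?_).2 ⟨hS.exact, hS.epi_g⟩
      exact ShortComplex.isoMk (Iso.refl _) (Iso.refl _) (Iso.refl _)
        ((Category.id_comp _).trans (Category.comp_id _).symm)
        ((Category.id_comp _).trans
          ((ChainComplex.toSingle₀Equiv_symm_apply_f_zero (C := S.lengthOneComplex) S.g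
            S.zero).symm.trans (Category.comp_id _).symm))
    | succ n =>
      rw [quasiIsoAt_iff_exactAt' (hL := ChainComplex.exactAt_succ_single_obj ..)]
      exact hS.lengthOneComplex_exactAt_succ n⟩

lemma ShortExact.subsingleton_ext_one_iff {R : Type*} [Ring R] [Linear R C] [EnoughProjectives C]
    (hS : S.ShortExact) [Projective S.X₁] [Projective S.X₂] (Y : C) :
    Subsingleton (((Ext R C 1).obj (Opposite.op S.X₃)).obj Y) ↔
      ∀ g : S.X₁ ⟶ Y, ∃ h : S.X₂ ⟶ Y, S.f ≫ h = g := by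
  rw [← ModuleCat.isZero_iff_subsingleton, Iso.isZero_iff (hS.projectiveResolution.isoExt 1 Y),
    ← HomologicalComplex.exactAt_iff_isZero_homology,
    HomologicalComplex.exactAt_iff' _ 0 1 2 (by simp) (by simp), ShortComplex.moduleCat_exact_iff]
  refine ⟨fun h g => h g ?_, fun h g _ => h g⟩
  exact (isZero_zero C).eq_of_src _ _

end CategoryTheory.ShortComplex

section Contraadjusted

variable {A : Type u} [CommRing A] (t : A)

noncomputable abbrev telescopeShortComplex : ShortComplex (ModuleCat.{u} A) :=
  ShortComplex.mk (ModuleCat.ofHom (telescopeDiff t))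
    (ModuleCat.ofHom (telescopeProj t (Localization.Away t)))
    (ModuleCat.hom_ext (telescopeProj_comp_telescopeDiff t _))

lemma telescopeShortComplex_shortExact : (telescopeShortComplex t).ShortExact :=
  ModuleCat.shortComplex_shortExact _ (exact_telescopeDiff_telescopeProj t (Localization.Away t))
    (telescopeDiff_injective t) (telescopeProj_surjective t (Localization.Away t))

lemma subsingleton_ext_one_localizationAway_iff (M : Type u) [AddCommGroup M] [Module A M] :
    Subsingleton (((Ext A (ModuleCat A) 1).obj
        (Opposite.op (ModuleCat.of A (Localization.Away t)))).obj (ModuleCat.of A M)) ↔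
      Function.Surjective fun (c : ℕ → M) n => c n - t • c (n + 1) := by
  refine ((telescopeShortComplex_shortExact t).subsingleton_ext_one_iff _).trans
    (Iff.trans ?_ (forall_exists_comp_telescopeDiff_iff t))
  constructor
  · intro H g
    obtain ⟨h, hh⟩ := H (ModuleCat.ofHom g)
    exact ⟨h.hom, congr(ModuleCat.Hom.hom $hh)⟩
  · intro H g
    obtain ⟨h, hh⟩ := H g.hom
    exact ⟨ModuleCat.ofHom h, ModuleCat.hom_ext hh⟩

end Contraadjusted

lemma surjective_telescope_units_mul {A M : Type*} [CommRing A] [AddCommGroup M] [Module A M]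
    (u : Aˣ) {a : A} (h : Function.Surjective fun (c : ℕ → M) n => c n - a • c (n + 1)) :
    Function.Surjective fun (c : ℕ → M) n => c n - ((u : A) * a) • c (n + 1) := by
  intro b
  obtain ⟨d, hd⟩ := h fun n => (u : A) ^ n • b n
  refine ⟨fun n => (↑u⁻¹ : A) ^ n • d n, funext fun n => ?_⟩
  have hdn : d n - a • d (n + 1) = (u : A) ^ n • b n := congr_fun hd n
  have hu : (u : A) * ↑u⁻¹ = 1 := u.mul_inv
  have hun : (↑u⁻¹ : A) ^ n * (u : A) ^ n = 1 := by rw [← mul_pow, u.inv_mul, one_pow]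
  linear_combination (norm := module) (↑u⁻¹ : A) ^ n • hdn + hun • b n -
    ((↑u⁻¹ : A) ^ n * a) • hu • d (n + 1)

/-- Let `f : R → R'` be a morphism of commutative rings such that every
`r' ∈ R'` can be written as `r' = u · f(r)` with `r ∈ R` and `u ∈ R'` invertible.  Then an
`R'`-module `C` is contraadjusted as an `R'`-module if and only if it is contraadjusted as
an `R`-module (via restriction of scalars along `f`). -/
theorem contraadjusted_iff_contraadjusted_restrictScalars
    (R R' : Type) [CommRing R] [CommRing R'] (f : R →+* R')
    (hf : ∀ r' : R', ∃ (r : R) (u : R'ˣ), r' = (u : R') * f r)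
    (C : Type) [AddCommGroup C] [Module R' C] :
    (∀ t' : R', Subsingleton (((Ext R' (ModuleCat R') 1).obj
        (Opposite.op (ModuleCat.of R' (Localization.Away t')))).obj (ModuleCat.of R' C))) ↔
    (∀ t : R,
      letI : Module R C := Module.compHom C f
      Subsingleton (((Ext R (ModuleCat R) 1).obj
        (Opposite.op (ModuleCat.of R (Localization.Away t)))).obj (ModuleCat.of R C))) := by
  let _ : Module R C := Module.compHom C f
  simp only [subsingleton_ext_one_localizationAway_iff]
  refine ⟨fun H t => H (f t), fun H t' => ?_⟩
  obtain ⟨t, u, rfl⟩ := hf t'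
  exact surjective_telescope_units_mul u (H t)
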